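/- Let q = p^m be a prime power and let X₁, X₂ be schemes over 𝔽_q. Let X := X₁ ×_{Spec 𝔽_q} X₂ and let φ₁ := φ_{X₁} × id and φ₂ := id × φ_{X₂} be the two partial Frobenius endomorphisms of X. Then the induced maps on the underlying topological space |X| are mutually inverse: |φ₁| ∘ |φ₂| = id_{|X|} and |φ₂| ∘ |φ₁| = id_{|X|}; in particular each partial Frobenius induces a homeomorphism of |X|. -/

import Mathlib

/-- The `p`-th power map as a ring homomorphism, on a commutative ring in which `p = 0`
(`p` a prime). -/
def pthPowerHom {p : ℕ} (hp : p.Prime) (R : Type*) [CommRing R] (h : (p : R) = 0) :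
    R →+* R where
  toFun x := x ^ p
  map_one' := one_pow p
  map_mul' x y := mul_pow x y p
  map_zero' := zero_pow hp.ne_zero
  map_add' x y := by
    show (x + y) ^ p = x ^ p + y ^ p
    obtain ⟨r, hr⟩ := exists_add_pow_prime_eq hp x y
    rw [hr, h, zero_mul, zero_mul, zero_mul, add_zero]

open AlgebraicGeometry CategoryTheory TopologicalSpace Opposite Limits

/-- The absolute Frobenius morphism of a scheme over `𝔽_p`: it is the identity on the
underlying topological space and raises sections of the structure sheaf to the `p`-th
power. -/
noncomputable def absFrob (p : ℕ) (hp : p.Prime) (X : Scheme)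
    (hX : ∀ U : X.Opens, (p : Γ(X, U)) = 0) : X ⟶ X :=
  Scheme.Hom.mk
    { base := 𝟙 X.toPresheafedSpace.carrier
      c :=
        { app := fun U => CommRingCat.ofHom (pthPowerHom hp _ (hX U.unop))
          naturality := by
            intro U V f
            ext x
            rw [comp_apply, comp_apply]
            show pthPowerHom hp _ (hX V.unop) (X.presheaf.map f x)
              = X.presheaf.map f (pthPowerHom hp _ (hX U.unop) x)
            show (X.presheaf.map f x) ^ p = X.presheaf.map f (x ^ p)
            rw [map_pow] }
      prop := by
        intro x
        dsimp only
        refine ⟨fun a ha => ?_⟩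
        obtain ⟨U, hxU, s, rfl⟩ := TopCat.Presheaf.exists_germ_eq X.presheaf a
        erw [PresheafedSpace.stalkMap_germ_apply] at ha
        dsimp only at ha
        replace ha : IsUnit ((X.presheaf.germ U x hxU) (s ^ p)) := ha
        rw [map_pow] at ha
        exact (isUnit_pow_iff hp.ne_zero).mp ha }

/-- The `q`-absolute Frobenius (`q = p ^ m`) of a scheme over `𝔽_p`:
the `m`-th iterate of the absolute Frobenius. -/
noncomputable def qFrob (p : ℕ) (hp : p.Prime) (m : ℕ) (X : Scheme)
    (hX : ∀ U : X.Opens, (p : Γ(X, U)) = 0) : X ⟶ X :=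
  match m with
  | 0 => 𝟙 X
  | m + 1 => absFrob p hp X hX ≫ qFrob p hp m X hX

/-- The first partial Frobenius `φ₁ = φ_{X₁} × id` on the fibre product `X₁ ×_S X₂`. -/
noncomputable def partialFrobFst (p : ℕ) (hp : p.Prime) (m : ℕ) {S X₁ X₂ : Scheme}
    (f₁ : X₁ ⟶ S) (f₂ : X₂ ⟶ S)
    (hX₁ : ∀ U : X₁.Opens, (p : Γ(X₁, U)) = 0)
    (hf₁ : qFrob p hp m X₁ hX₁ ≫ f₁ = f₁) :
    pullback f₁ f₂ ⟶ pullback f₁ f₂ :=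
  pullback.map f₁ f₂ f₁ f₂ (qFrob p hp m X₁ hX₁) (𝟙 X₂) (𝟙 S)
    (by rw [Category.comp_id, hf₁]) (by rw [Category.comp_id, Category.id_comp])

/-- The second partial Frobenius `φ₂ = id × φ_{X₂}` on the fibre product `X₁ ×_S X₂`. -/
noncomputable def partialFrobSnd (p : ℕ) (hp : p.Prime) (m : ℕ) {S X₁ X₂ : Scheme}
    (f₁ : X₁ ⟶ S) (f₂ : X₂ ⟶ S)
    (hX₂ : ∀ U : X₂.Opens, (p : Γ(X₂, U)) = 0)
    (hf₂ : qFrob p hp m X₂ hX₂ ≫ f₂ = f₂) :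
    pullback f₁ f₂ ⟶ pullback f₁ f₂ :=
  pullback.map f₁ f₂ f₁ f₂ (𝟙 X₁) (qFrob p hp m X₂ hX₂) (𝟙 S)
    (by rw [Category.comp_id, Category.id_comp]) (by rw [Category.comp_id, hf₂])

/-! Both composites of the partial Frobenii are `φ_{X₁} × φ_{X₂}`, and by naturality of the
absolute Frobenius this product is the `q`-Frobenius of the fibre product itself. The absolute
Frobenius is the identity on points, so both composites are the identity on `|X₁ ×_S X₂|`. -/

section Frobenius

variable (p : ℕ) (hp : p.Prime) (m : ℕ)

lemma absFrob_naturality {X Y : Scheme} (g : X ⟶ Y)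
    (hX : ∀ U : X.Opens, (p : Γ(X, U)) = 0) (hY : ∀ U : Y.Opens, (p : Γ(Y, U)) = 0) :
    g ≫ absFrob p hp Y hY = absFrob p hp X hX ≫ g := by
  refine Scheme.Hom.ext rfl fun U => ?_
  ext x
  simp only [Scheme.Hom.comp_app, eqToHom_op, eqToHom_map]
  exact map_pow (g.app U).hom x p

lemma qFrob_naturality {X Y : Scheme} (g : X ⟶ Y)
    (hX : ∀ U : X.Opens, (p : Γ(X, U)) = 0) (hY : ∀ U : Y.Opens, (p : Γ(Y, U)) = 0) :
    g ≫ qFrob p hp m Y hY = qFrob p hp m X hX ≫ g := by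
  induction m with
  | zero => exact (Category.comp_id g).trans (Category.id_comp g).symm
  | succ m ih =>
    change g ≫ absFrob p hp Y hY ≫ qFrob p hp m Y hY
      = (absFrob p hp X hX ≫ qFrob p hp m X hX) ≫ g
    rw [reassoc_of% absFrob_naturality p hp g hX hY, ih, Category.assoc]

lemma qFrob_base (X : Scheme) (hX : ∀ U : X.Opens, (p : Γ(X, U)) = 0) :
    ⇑(qFrob p hp m X hX).base = id := by
  induction m with
  | zero => rfl
  | succ m ih =>
    change ⇑(absFrob p hp X hX ≫ qFrob p hp m X hX).base = id
    rw [Scheme.Hom.comp_base, TopCat.coe_comp, ih]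
    rfl

end Frobenius

lemma natCast_sections_eq_zero_of_hom (n : ℕ) {X Y : Scheme} (g : Y ⟶ X)
    (hX : (n : Γ(X, ⊤)) = 0) (U : Y.Opens) : (n : Γ(Y, U)) = 0 := by
  rw [← map_natCast (Y.presheaf.map (homOfLE (le_top : U ≤ ⊤)).op).hom,
    ← map_natCast g.appTop.hom, hX, map_zero, map_zero]

section PartialFrobenius

variable (p : ℕ) (hp : p.Prime) (m : ℕ) {S X₁ X₂ : Scheme} (f₁ : X₁ ⟶ S) (f₂ : X₂ ⟶ S)
  (hX₁ : ∀ U : X₁.Opens, (p : Γ(X₁, U)) = 0) (hX₂ : ∀ U : X₂.Opens, (p : Γ(X₂, U)) = 0)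
  (hf₁ : qFrob p hp m X₁ hX₁ ≫ f₁ = f₁) (hf₂ : qFrob p hp m X₂ hX₂ ≫ f₂ = f₂)

lemma qFrob_pullback_eq_map
    (hX : ∀ U : (pullback f₁ f₂).Opens, (p : Γ(pullback f₁ f₂, U)) = 0) :
    qFrob p hp m (pullback f₁ f₂) hX =
      pullback.map f₁ f₂ f₁ f₂ (qFrob p hp m X₁ hX₁) (qFrob p hp m X₂ hX₂) (𝟙 S)
        (by rw [Category.comp_id, hf₁]) (by rw [Category.comp_id, hf₂]) := by
  apply pullback.hom_ext
  · rw [pullback.lift_fst, qFrob_naturality]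
  · rw [pullback.lift_snd, qFrob_naturality]

lemma partialFrobFst_comp_partialFrobSnd
    (hX : ∀ U : (pullback f₁ f₂).Opens, (p : Γ(pullback f₁ f₂, U)) = 0) :
    partialFrobFst p hp m f₁ f₂ hX₁ hf₁ ≫ partialFrobSnd p hp m f₁ f₂ hX₂ hf₂ =
      qFrob p hp m (pullback f₁ f₂) hX := by
  rw [qFrob_pullback_eq_map p hp m f₁ f₂ hX₁ hX₂ hf₁ hf₂, partialFrobFst, partialFrobSnd,
    pullback.map_comp]
  simp only [Category.comp_id, Category.id_comp]

lemma partialFrobSnd_comp_partialFrobFst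
    (hX : ∀ U : (pullback f₁ f₂).Opens, (p : Γ(pullback f₁ f₂, U)) = 0) :
    partialFrobSnd p hp m f₁ f₂ hX₂ hf₂ ≫ partialFrobFst p hp m f₁ f₂ hX₁ hf₁ =
      qFrob p hp m (pullback f₁ f₂) hX := by
  rw [qFrob_pullback_eq_map p hp m f₁ f₂ hX₁ hX₂ hf₁ hf₂, partialFrobFst, partialFrobSnd,
    pullback.map_comp]
  simp only [Category.comp_id, Category.id_comp]

end PartialFrobenius

lemma base_comp_eq_id_of_comp_eq_qFrob (p : ℕ) (hp : p.Prime) (m : ℕ) {X : Scheme}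
    (hX : ∀ U : X.Opens, (p : Γ(X, U)) = 0) {φ ψ : X ⟶ X} (h : φ ≫ ψ = qFrob p hp m X hX) :
    ⇑ψ.base ∘ ⇑φ.base = id := by
  rw [← TopCat.coe_comp, ← Scheme.Hom.comp_base, h, qFrob_base]

theorem partialFrob_base_mutually_inverse_general (p m : ℕ) [Fact p.Prime]
    {X₁ X₂ : Scheme} (f₁ : X₁ ⟶ Spec (CommRingCat.of (GaloisField p m)))
    (f₂ : X₂ ⟶ Spec (CommRingCat.of (GaloisField p m)))
    (hX₁ : ∀ U : X₁.Opens, (p : Γ(X₁, U)) = 0)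
    (hX₂ : ∀ U : X₂.Opens, (p : Γ(X₂, U)) = 0)
    (hf₁ : qFrob p Fact.out m X₁ hX₁ ≫ f₁ = f₁)
    (hf₂ : qFrob p Fact.out m X₂ hX₂ ≫ f₂ = f₂) :
    ⇑(partialFrobFst p Fact.out m f₁ f₂ hX₁ hf₁).base ∘
          ⇑(partialFrobSnd p Fact.out m f₁ f₂ hX₂ hf₂).base = id ∧
      ⇑(partialFrobSnd p Fact.out m f₁ f₂ hX₂ hf₂).base ∘
          ⇑(partialFrobFst p Fact.out m f₁ f₂ hX₁ hf₁).base = id ∧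
      IsHomeomorph ⇑(partialFrobFst p Fact.out m f₁ f₂ hX₁ hf₁).base ∧
      IsHomeomorph ⇑(partialFrobSnd p Fact.out m f₁ f₂ hX₂ hf₂).base := by
  set φ₁ := partialFrobFst p Fact.out m f₁ f₂ hX₁ hf₁
  set φ₂ := partialFrobSnd p Fact.out m f₁ f₂ hX₂ hf₂
  have hX := natCast_sections_eq_zero_of_hom p (pullback.fst f₁ f₂) (hX₁ ⊤)
  have h₁₂ : ⇑φ₂.base ∘ ⇑φ₁.base = id := base_comp_eq_id_of_comp_eq_qFrob p _ m hX
    (partialFrobFst_comp_partialFrobSnd p _ m f₁ f₂ hX₁ hX₂ hf₁ hf₂ hX)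
  have h₂₁ : ⇑φ₁.base ∘ ⇑φ₂.base = id := base_comp_eq_id_of_comp_eq_qFrob p _ m hX
    (partialFrobSnd_comp_partialFrobFst p _ m f₁ f₂ hX₁ hX₂ hf₁ hf₂ hX)
  refine ⟨h₂₁, h₁₂, ?_, ?_⟩
  · exact isHomeomorph_iff_exists_inverse.mpr ⟨φ₁.base.hom.continuous, φ₂.base,
      congrFun h₁₂, congrFun h₂₁, φ₂.base.hom.continuous⟩
  · exact isHomeomorph_iff_exists_inverse.mpr ⟨φ₂.base.hom.continuous, φ₁.base,
      congrFun h₂₁, congrFun h₁₂, φ₁.base.hom.continuous⟩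

/-- Asserted in Section 4 of the paper: on `X = X₁ ×_{Spec 𝔽_q} X₂`, the maps induced by
the two partial Frobenius morphisms on the underlying topological space `|X|` are mutually
inverse; in particular each of them induces a homeomorphism of `|X|`. -/
theorem partialFrob_base_mutually_inverse (p m : ℕ) [Fact p.Prime] (hm : 0 < m)
    {X₁ X₂ : Scheme} (f₁ : X₁ ⟶ Spec (CommRingCat.of (GaloisField p m)))
    (f₂ : X₂ ⟶ Spec (CommRingCat.of (GaloisField p m)))
    (hX₁ : ∀ U : X₁.Opens, (p : Γ(X₁, U)) = 0)
    (hX₂ : ∀ U : X₂.Opens, (p : Γ(X₂, U)) = 0)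
    (hf₁ : qFrob p Fact.out m X₁ hX₁ ≫ f₁ = f₁)
    (hf₂ : qFrob p Fact.out m X₂ hX₂ ≫ f₂ = f₂) :
    ⇑(partialFrobFst p Fact.out m f₁ f₂ hX₁ hf₁).base ∘
          ⇑(partialFrobSnd p Fact.out m f₁ f₂ hX₂ hf₂).base = id ∧
      ⇑(partialFrobSnd p Fact.out m f₁ f₂ hX₂ hf₂).base ∘
          ⇑(partialFrobFst p Fact.out m f₁ f₂ hX₁ hf₁).base = id ∧
      IsHomeomorph ⇑(partialFrobFst p Fact.out m f₁ f₂ hX₁ hf₁).base ∧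
      IsHomeomorph ⇑(partialFrobSnd p Fact.out m f₁ f₂ hX₂ hf₂).base :=
  partialFrob_base_mutually_inverse_general p m f₁ f₂ hX₁ hX₂ hf₁ hf₂
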